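/- Let a ∈ ℂ, t ∈ ℝ, u ∈ ℂ with |u| = 1, and λ > 0. For (z,ζ,w) ∈ ℂ³ set δ := 1 − 2i·conj(a)·z − (t + i|a|²)·w + i·conj(a)²·(wζ + iz²), and define ψ(z,ζ,w) := ( λu·(z + aw − conj(a)·(wζ + iz²))/δ , u²·(ζ − 2iaz − ia²w − (t − i|a|²)·(wζ + iz²))/δ , λ²·w/δ ) (components in the order (z̃, ζ̃, w̃)). Then ψ(0,0,0) = (0,0,0), and whenever δ ≠ 0 and (z,ζ,w) satisfies the defining equation (1−|ζ|²)·Im w = |z|² + Re(z²·conj(ζ)), the image (z̃,ζ̃,w̃) satisfies (1−|ζ̃|²)·Im w̃ = |z̃|² + Re(z̃²·conj(ζ̃)). (These ψ constitute the 5-dimensional stability group Aut(𝒳,0).) -/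

import Mathlib

/-- The common denominator `δ` of the stability-group automorphisms of `(𝒳,0)`:
`δ = 1 − 2i·conj(a)·z − (t + i|a|²)·w + i·conj(a)²·(wζ + iz²)`. -/
noncomputable def deltaAut (a : ℂ) (t : ℝ) (z ζ w : ℂ) : ℂ :=
  1 - 2 * Complex.I * (starRingEnd ℂ) a * z
    - ((t : ℂ) + Complex.I * (Complex.normSq a : ℂ)) * w
    + Complex.I * ((starRingEnd ℂ) a) ^ 2 * (w * ζ + Complex.I * z ^ 2)

/-- First component `z̃` of the stability-group automorphism `ψ`. -/
noncomputable def psiZ (a : ℂ) (t : ℝ) (u : ℂ) (l : ℝ) (z ζ w : ℂ) : ℂ :=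
  (l : ℂ) * u * (z + a * w - (starRingEnd ℂ) a * (w * ζ + Complex.I * z ^ 2)) /
    deltaAut a t z ζ w

/-- Second component `ζ̃` of the stability-group automorphism `ψ`. -/
noncomputable def psiZeta (a : ℂ) (t : ℝ) (u : ℂ) (l : ℝ) (z ζ w : ℂ) : ℂ :=
  u ^ 2 * (ζ - 2 * Complex.I * a * z - Complex.I * a ^ 2 * w
      - ((t : ℂ) - Complex.I * (Complex.normSq a : ℂ)) * (w * ζ + Complex.I * z ^ 2)) /
    deltaAut a t z ζ w

/-- Third component `w̃` of the stability-group automorphism `ψ`. -/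
noncomputable def psiW (a : ℂ) (t : ℝ) (u : ℂ) (l : ℝ) (z ζ w : ℂ) : ℂ :=
  (l : ℂ) ^ 2 * w / deltaAut a t z ζ w

/-! In the coordinates `(s, z, ζ, w, q) ∈ ℂ⁵`, a point `(z, ζ, w)` lifts to
`(1, z, ζ, w, wζ + iz²)`, which lies on the quadric `sq = wζ + iz²`. On such lifts the defining
equation of `𝒳` becomes the vanishing of the real form `Im(w s̄) − Im(q ζ̄) − |z|²`, a
Hermitian form. The map `ψ` is the projectivisation of a linear map of `ℂ⁵`,
the composite of three simple ones (an `a`-shear, a `t`-shear and a dilation–rotation), each of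
which multiplies both forms by a constant. Hence the lifted image again lies on the quadric, so
dividing by its first coordinate `δ` recovers the lift of `ψ(z, ζ, w)`, and the Hermitian form
still vanishes there. -/

open Complex ComplexConjugate

namespace LightConeTube

@[ext] structure Lift where
  s : ℂ
  z : ℂ
  ζ : ℂ
  w : ℂ
  q : ℂ

namespace Lift

instance : SMul ℂ Lift := ⟨fun c v => ⟨c * v.s, c * v.z, c * v.ζ, c * v.w, c * v.q⟩⟩

@[simp] lemma smul_s (c : ℂ) (v : Lift) : (c • v).s = c * v.s := rfl
@[simp] lemma smul_z (c : ℂ) (v : Lift) : (c • v).z = c * v.z := rfl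
@[simp] lemma smul_ζ (c : ℂ) (v : Lift) : (c • v).ζ = c * v.ζ := rfl
@[simp] lemma smul_w (c : ℂ) (v : Lift) : (c • v).w = c * v.w := rfl
@[simp] lemma smul_q (c : ℂ) (v : Lift) : (c • v).q = c * v.q := rfl

def ofPoint (z ζ w : ℂ) : Lift := ⟨1, z, ζ, w, w * ζ + I * z ^ 2⟩

def quadForm (v : Lift) : ℂ := v.s * v.q - v.w * v.ζ - I * v.z ^ 2

noncomputable def hermForm (v : Lift) : ℝ :=
  (v.w * conj v.s).im - (v.q * conj v.ζ).im - ‖v.z‖ ^ 2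

lemma quadForm_ofPoint (z ζ w : ℂ) : quadForm (ofPoint z ζ w) = 0 := by
  simp [quadForm, ofPoint]

lemma hermForm_ofPoint (z ζ w : ℂ) :
    hermForm (ofPoint z ζ w) = (1 - ‖ζ‖ ^ 2) * w.im - (‖z‖ ^ 2 + (z ^ 2 * conj ζ).re) := by
  simp only [hermForm, ofPoint, Complex.sq_norm, normSq_apply]
  simp only [map_one, mul_one, mul_im, mul_re, add_im, add_re, I_re, I_im, conj_re, conj_im, sq]
  ring

lemma hermForm_smul (c : ℂ) (v : Lift) : hermForm (c • v) = ‖c‖ ^ 2 * hermForm v := by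
  have key : ∀ x y : ℂ, c * x * conj (c * y) = (‖c‖ ^ 2 : ℝ) * (x * conj y) := by
    intro x y
    rw [map_mul, ← Complex.normSq_eq_norm_sq, ← mul_conj]
    ring
  simp only [hermForm, smul_s, smul_z, smul_ζ, smul_w, smul_q, key, im_ofReal_mul, norm_mul]
  ring

lemma ofPoint_div_eq_smul {v : Lift} (hs : v.s ≠ 0) (hq : quadForm v = 0) :
    ofPoint (v.z / v.s) (v.ζ / v.s) (v.w / v.s) = v.s⁻¹ • v := by
  rw [quadForm, sub_sub, sub_eq_zero] at hq
  ext <;> simp only [ofPoint, smul_s, smul_z, smul_ζ, smul_w, smul_q] <;> field_simp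
  linear_combination -hq

lemma hermForm_ofPoint_div {v : Lift} (hs : v.s ≠ 0) (hq : quadForm v = 0) :
    hermForm (ofPoint (v.z / v.s) (v.ζ / v.s) (v.w / v.s)) = hermForm v / ‖v.s‖ ^ 2 := by
  rw [ofPoint_div_eq_smul hs hq, hermForm_smul, norm_inv, inv_pow, inv_mul_eq_div]

def aShear (a : ℂ) (v : Lift) : Lift :=
  ⟨v.s - 2 * I * conj a * v.z - I * (a * conj a) * v.w + I * conj a ^ 2 * v.q,
    v.z + a * v.w - conj a * v.q,
    v.ζ - 2 * I * a * v.z - I * a ^ 2 * v.w + I * (a * conj a) * v.q,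
    v.w, v.q⟩

def tShear (t : ℝ) (v : Lift) : Lift := ⟨v.s - t * v.w, v.z, v.ζ - t * v.q, v.w, v.q⟩

def dilation (l : ℝ) (u : ℂ) (v : Lift) : Lift :=
  ⟨v.s, l * u * v.z, u ^ 2 * v.ζ, l ^ 2 * v.w, l ^ 2 * u ^ 2 * v.q⟩

lemma quadForm_aShear (a : ℂ) (v : Lift) : quadForm (aShear a v) = quadForm v := by
  simp only [quadForm, aShear]
  ring

lemma quadForm_tShear (t : ℝ) (v : Lift) : quadForm (tShear t v) = quadForm v := by
  simp only [quadForm, tShear]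
  ring

lemma quadForm_dilation (l : ℝ) (u : ℂ) (v : Lift) :
    quadForm (dilation l u v) = l ^ 2 * u ^ 2 * quadForm v := by
  simp only [quadForm, dilation]
  ring

lemma hermForm_aShear (a : ℂ) (v : Lift) : hermForm (aShear a v) = hermForm v := by
  simp only [hermForm, aShear, Complex.sq_norm, normSq_apply]
  simp only [map_add, map_sub, map_mul, sq, mul_im, mul_re, add_im, add_re, sub_im, sub_re,
    I_re, I_im, conj_re, conj_im, re_ofNat, im_ofNat]
  ring

lemma hermForm_tShear (t : ℝ) (v : Lift) : hermForm (tShear t v) = hermForm v := by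
  simp only [hermForm, tShear, map_sub, map_mul, conj_ofReal, mul_im, mul_re, sub_im, sub_re,
    ofReal_re, ofReal_im, conj_re, conj_im]
  ring

lemma hermForm_dilation (l : ℝ) {u : ℂ} (hu : ‖u‖ = 1) (v : Lift) :
    hermForm (dilation l u v) = l ^ 2 * hermForm v := by
  have hu' : u * conj u = 1 := by rw [mul_conj, normSq_eq_norm_sq, hu]; norm_num
  have hw : (l : ℂ) ^ 2 * v.w * conj v.s = (l ^ 2 : ℝ) * (v.w * conj v.s) := by push_cast; ring
  have hq : (l : ℂ) ^ 2 * u ^ 2 * v.q * conj (u ^ 2 * v.ζ) = (l ^ 2 : ℝ) * (v.q * conj v.ζ) := by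
    rw [map_mul, map_pow]
    push_cast
    linear_combination (l : ℂ) ^ 2 * v.q * conj v.ζ * (u * conj u + 1) * hu'
  simp only [hermForm, dilation, hw, hq, im_ofReal_mul, norm_mul, norm_real, Real.norm_eq_abs, hu]
  rw [mul_one, mul_pow, sq_abs]
  ring

noncomputable def psiLinear (a : ℂ) (t : ℝ) (u : ℂ) (l : ℝ) (v : Lift) : Lift :=
  dilation l u (tShear t (aShear a v))

lemma quadForm_psiLinear (a : ℂ) (t : ℝ) (u : ℂ) (l : ℝ) (v : Lift) :
    quadForm (psiLinear a t u l v) = l ^ 2 * u ^ 2 * quadForm v := by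
  rw [psiLinear, quadForm_dilation, quadForm_tShear, quadForm_aShear]

lemma hermForm_psiLinear (a : ℂ) (t : ℝ) {u : ℂ} (hu : ‖u‖ = 1) (l : ℝ) (v : Lift) :
    hermForm (psiLinear a t u l v) = l ^ 2 * hermForm v := by
  rw [psiLinear, hermForm_dilation l hu, hermForm_tShear, hermForm_aShear]

lemma psiLinear_ofPoint_s (a : ℂ) (t : ℝ) (u : ℂ) (l : ℝ) (z ζ w : ℂ) :
    (psiLinear a t u l (ofPoint z ζ w)).s = deltaAut a t z ζ w := by
  simp only [psiLinear, dilation, tShear, aShear, ofPoint, deltaAut, mul_conj]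
  ring

lemma psi_eq_div_psiLinear (a : ℂ) (t : ℝ) (u : ℂ) (l : ℝ) (z ζ w : ℂ) :
    let V := psiLinear a t u l (ofPoint z ζ w)
    psiZ a t u l z ζ w = V.z / V.s ∧ psiZeta a t u l z ζ w = V.ζ / V.s ∧
      psiW a t u l z ζ w = V.w / V.s := by
  simp only [psiLinear_ofPoint_s]
  simp only [psiZ, psiZeta, psiW, psiLinear, dilation, tShear, aShear, ofPoint, mul_conj,
    true_and, and_true]
  ring

end Lift

end LightConeTube

open LightConeTube Lift in
theorem stability_group_of_X_general (a u : ℂ) (t l : ℝ)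
    (hu : ‖u‖ = 1) :
    (psiZ a t u l 0 0 0 = 0 ∧ psiZeta a t u l 0 0 0 = 0 ∧ psiW a t u l 0 0 0 = 0) ∧
    (∀ z ζ w : ℂ, deltaAut a t z ζ w ≠ 0 →
      (1 - ‖ζ‖ ^ 2) * w.im
          = ‖z‖ ^ 2 + (z ^ 2 * (starRingEnd ℂ) ζ).re →
      (1 - ‖psiZeta a t u l z ζ w‖ ^ 2) * (psiW a t u l z ζ w).im
        = ‖psiZ a t u l z ζ w‖ ^ 2
          + ((psiZ a t u l z ζ w) ^ 2 * (starRingEnd ℂ) (psiZeta a t u l z ζ w)).re) := by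
  refine ⟨by simp [psiZ, psiZeta, psiW], fun z ζ w hδ hX => ?_⟩
  set V := psiLinear a t u l (ofPoint z ζ w)
  have hVs : V.s ≠ 0 := by rwa [psiLinear_ofPoint_s]
  have hVquad : quadForm V = 0 := by rw [quadForm_psiLinear, quadForm_ofPoint, mul_zero]
  have hVherm : hermForm V = 0 := by
    rw [hermForm_psiLinear a t hu, hermForm_ofPoint, sub_eq_zero.mpr hX, mul_zero]
  obtain ⟨hz, hζ, hw⟩ := psi_eq_div_psiLinear a t u l z ζ w
  rw [← sub_eq_zero, ← hermForm_ofPoint, hz, hζ, hw, hermForm_ofPoint_div hVs hVquad, hVherm,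
    zero_div]

/-- For `a ∈ ℂ`, `t ∈ ℝ`, `|u| = 1`, `λ > 0`, the map
`ψ = (psiZ, psiZeta, psiW)` fixes the origin, and whenever `δ ≠ 0` and `(z,ζ,w)`
satisfies the defining equation `(1−|ζ|²)·Im w = |z|² + Re(z²·conj ζ)` of `𝒳`, so does
the image `(z̃,ζ̃,w̃)`.  (These `ψ` constitute the stability group `Aut(𝒳,0)`.) -/
theorem stability_group_of_X (a u : ℂ) (t l : ℝ)
    (hu : ‖u‖ = 1) (hl : 0 < l) :
    (psiZ a t u l 0 0 0 = 0 ∧ psiZeta a t u l 0 0 0 = 0 ∧ psiW a t u l 0 0 0 = 0) ∧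
    (∀ z ζ w : ℂ, deltaAut a t z ζ w ≠ 0 →
      (1 - ‖ζ‖ ^ 2) * w.im
          = ‖z‖ ^ 2 + (z ^ 2 * (starRingEnd ℂ) ζ).re →
      (1 - ‖psiZeta a t u l z ζ w‖ ^ 2) * (psiW a t u l z ζ w).im
        = ‖psiZ a t u l z ζ w‖ ^ 2
          + ((psiZ a t u l z ζ w) ^ 2 * (starRingEnd ℂ) (psiZeta a t u l z ζ w)).re) :=
  stability_group_of_X_general a u t l hu
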